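/- For any integer k and integer n \ge 1, (n+1) B_n^{(k)}(x) - n(x + 1/2) B_{n-1}^{(k)}(x) + \sum_{l=0}^{n-2} \binom{n}{l} B_{n-l} B_l^{(k)}(x) = \sum_{l=0}^{n} \binom{n}{l} B_{n-l} B_l^{(k-1)}(x). -/

import Mathlib

open PowerSeries Finset Nat

/-- The formal power series `e^{-t}`. -/
noncomputable def expNeg : PowerSeries ℂ := PowerSeries.rescale (-1) (PowerSeries.exp ℂ)

/-- The generating function `Li_k(1-e^{-t})/(1-e^{-t}) = ∑_{m≥0} (1-e^{-t})^m/(m+1)^k`,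
given coefficientwise (the sum truncates since `(1-e^{-t})^m` has order `≥ m`). -/
noncomputable def polyBernoulliGF (k : ℤ) : PowerSeries ℂ :=
  PowerSeries.mk fun n => ∑ m ∈ Finset.range (n + 1),
    (((m : ℂ) + 1) ^ k)⁻¹ * PowerSeries.coeff n ((1 - expNeg) ^ m)

/-- The poly-Bernoulli polynomial `B_n^{(k)}(x)`, defined by
`Li_k(1-e^{-t})/(1-e^{-t}) · e^{xt} = ∑ B_n^{(k)}(x) tⁿ/n!`. -/
noncomputable def polyBernoulli (k : ℤ) (n : ℕ) (x : ℂ) : ℂ :=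
  (n ! : ℂ) * PowerSeries.coeff n
    (polyBernoulliGF k * PowerSeries.mk fun j => x ^ j / (j ! : ℂ))

/-- Stirling numbers of the second kind, via `(e^t-1)^m = m! ∑_{l} S₂(l,m) t^l/l!`. -/
noncomputable def stirling2 (l m : ℕ) : ℂ :=
  (l ! : ℂ) / (m ! : ℂ) * PowerSeries.coeff l ((PowerSeries.exp ℂ - 1) ^ m)

/-! Write `z = 1 - e^{-t}`, so that `Li_k(z)/z = ∑ₘ zᵐ/(m+1)^k`. Since `z' = e^{-t}` and
`(e^t - 1) e^{-t} = z`, we get `(e^t - 1) (zᵐ)' = m zᵐ`, hence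
`(e^t - 1) Φₖ' = Φₖ₋₁ - Φₖ` for `Φₖ = Li_k(z)/z`. Multiplying by `t/(e^t - 1)` and by `e^{xt}`
gives `t (F' - x F) + (t/(e^t-1)) F = (t/(e^t-1)) G` for `F = Φₖ e^{xt}`, `G = Φₖ₋₁ e^{xt}`.
Comparing coefficients of `tⁿ/n!` turns both Bernoulli products into binomial convolutions;
the terms `l = n - 1, n` of the left one combine with `t (F' - x F)`. -/

theorem inv_zpow_sub_one_sub_inv_zpow {K : Type*} [Field K] {a : K} (ha : a ≠ 0) (k : ℤ) :
    (a ^ (k - 1))⁻¹ - (a ^ k)⁻¹ = (a - 1) * (a ^ k)⁻¹ := by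
  rw [zpow_sub_one₀ ha, mul_inv, inv_inv]
  ring

namespace PowerSeries

theorem derivative_rescale {R : Type*} [CommRing R] (a : R) (f : R⟦X⟧) :
    d⁄dX R (rescale a f) = C a * rescale a (d⁄dX R f) := by
  ext n
  simp only [coeff_derivative, coeff_rescale, coeff_C_mul, pow_succ]
  ring

theorem coeff_pow_eq_zero_of_constantCoeff_eq_zero {R : Type*} [CommSemiring R] {f : R⟦X⟧}
    (hf : constantCoeff f = 0) {n m : ℕ} (h : n < m) : coeff n (f ^ m) = 0 :=
  X_pow_dvd_iff.mp (pow_dvd_pow_of_dvd (X_dvd_iff.mpr hf) m) n h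

theorem coeff_mul_derivative_congr {R : Type*} [CommSemiring R] (h : R⟦X⟧) {f g : R⟦X⟧}
    {n : ℕ} (hfg : ∀ j ≤ n + 1, coeff j f = coeff j g) :
    coeff n (h * d⁄dX R f) = coeff n (h * d⁄dX R g) := by
  simp only [coeff_mul, coeff_derivative]
  refine sum_congr rfl fun p hp => ?_
  rw [hfg (p.2 + 1) (Nat.antidiagonal.snd_lt hp)]

theorem factorial_mul_coeff_mul {R : Type*} [CommSemiring R] (f g : R⟦X⟧) (n : ℕ) :
    (n ! : R) * coeff n (f * g) = ∑ l ∈ range (n + 1),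
      (n.choose l : R) * ((l ! : R) * coeff l f) * (((n - l)! : R) * coeff (n - l) g) := by
  rw [coeff_mul, Nat.sum_antidiagonal_eq_sum_range_succ (fun i j => coeff i f * coeff j g),
    mul_sum]
  refine sum_congr rfl fun l hl => ?_
  rw [← Nat.choose_mul_factorial_mul_factorial (Nat.le_of_lt_succ (mem_range.mp hl))]
  push_cast
  ring

theorem factorial_mul_coeff_mul_bernoulliPowerSeries {K : Type*} [Field K] [CharZero K]
    (f : K⟦X⟧) (n : ℕ) :
    (n ! : K) * coeff n (f * bernoulliPowerSeries K) =
      ∑ l ∈ range (n + 1), (n.choose l : K) * (bernoulli (n - l) : K) * ((l ! : K) * coeff l f) := by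
  rw [factorial_mul_coeff_mul]
  refine sum_congr rfl fun l _ => ?_
  have : ((n - l)! : K) ≠ 0 := Nat.cast_ne_zero.mpr (factorial_ne_zero _)
  simp only [bernoulliPowerSeries, coeff_mk, eq_ratCast]
  push_cast
  field_simp

theorem mk_pow_div_factorial {K : Type*} [Field K] [CharZero K] (x : K) :
    (mk fun j => x ^ j / (j ! : K)) = rescale x (exp K) := by
  ext n
  simp [coeff_rescale, coeff_exp, div_eq_mul_inv]

end PowerSeries

theorem derivative_expNeg : d⁄dX ℂ expNeg = -expNeg := by
  rw [expNeg, derivative_rescale, derivative_exp, map_neg, map_one, neg_one_mul]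

theorem exp_sub_one_mul_expNeg : (exp ℂ - 1) * expNeg = 1 - expNeg := by
  have h : exp ℂ * expNeg = 1 := exp_mul_exp_neg_eq_one
  rw [sub_mul, h, one_mul]

theorem constantCoeff_one_sub_expNeg : constantCoeff (1 - expNeg) = 0 := by
  rw [map_sub, map_one, expNeg, ← coeff_zero_eq_constantCoeff_apply, coeff_rescale, coeff_exp]
  simp

theorem exp_sub_one_mul_derivative_one_sub_expNeg_pow (m : ℕ) :
    (exp ℂ - 1) * d⁄dX ℂ ((1 - expNeg) ^ m) = m * (1 - expNeg) ^ m := by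
  rw [Derivation.leibniz_pow, map_sub, Derivation.map_one_eq_zero, derivative_expNeg, zero_sub,
    neg_neg, smul_eq_mul, nsmul_eq_mul]
  cases m with
  | zero => simp
  | succ m =>
    rw [pow_succ, ← exp_sub_one_mul_expNeg, Nat.add_sub_cancel]
    ring

noncomputable def polyBernoulliGFPartial (k : ℤ) (M : ℕ) : ℂ⟦X⟧ :=
  ∑ m ∈ range M, C (((m : ℂ) + 1) ^ k)⁻¹ * (1 - expNeg) ^ m

theorem coeff_polyBernoulliGF_eq_coeff_polyBernoulliGFPartial (k : ℤ) {n M : ℕ} (h : n < M) :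
    coeff n (polyBernoulliGF k) = coeff n (polyBernoulliGFPartial k M) := by
  rw [polyBernoulliGFPartial, map_sum, polyBernoulliGF, coeff_mk]
  simp only [coeff_C_mul]
  refine sum_subset (range_subset_range.mpr h) fun m _ hm => ?_
  rw [coeff_pow_eq_zero_of_constantCoeff_eq_zero constantCoeff_one_sub_expNeg
    (by simp only [mem_range, not_lt] at hm; omega), mul_zero]

theorem exp_sub_one_mul_derivative_polyBernoulliGFPartial (k : ℤ) (M : ℕ) :
    (exp ℂ - 1) * d⁄dX ℂ (polyBernoulliGFPartial k M) =
      polyBernoulliGFPartial (k - 1) M - polyBernoulliGFPartial k M := by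
  simp only [polyBernoulliGFPartial, map_sum, mul_sum, ← sum_sub_distrib]
  refine sum_congr rfl fun m _ => ?_
  rw [Derivation.leibniz, derivative_C, smul_zero, add_zero, smul_eq_mul, mul_left_comm,
    exp_sub_one_mul_derivative_one_sub_expNeg_pow, ← sub_mul, ← map_sub,
    inv_zpow_sub_one_sub_inv_zpow (Nat.cast_add_one_ne_zero m), add_sub_cancel_right, map_mul,
    map_natCast]
  ring

theorem exp_sub_one_mul_derivative_polyBernoulliGF (k : ℤ) :
    (exp ℂ - 1) * d⁄dX ℂ (polyBernoulliGF k) = polyBernoulliGF (k - 1) - polyBernoulliGF k := by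
  ext n
  have hcoeff (k' : ℤ) (j : ℕ) (hj : j < n + 2) :=
    coeff_polyBernoulliGF_eq_coeff_polyBernoulliGFPartial k' hj
  rw [coeff_mul_derivative_congr _ fun j hj => hcoeff k j (by omega),
    exp_sub_one_mul_derivative_polyBernoulliGFPartial, map_sub, map_sub,
    hcoeff k n (by omega), hcoeff (k - 1) n (by omega)]

theorem X_mul_derivative_polyBernoulliGF_add (k : ℤ) :
    X * d⁄dX ℂ (polyBernoulliGF k) + bernoulliPowerSeries ℂ * polyBernoulliGF k =
      bernoulliPowerSeries ℂ * polyBernoulliGF (k - 1) := by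
  rw [← bernoulliPowerSeries_mul_exp_sub_one, mul_assoc,
    exp_sub_one_mul_derivative_polyBernoulliGF]
  ring

theorem X_mul_derivative_polyBernoulliGF_mul_exp (k : ℤ) (x : ℂ) :
    X * d⁄dX ℂ (polyBernoulliGF k * rescale x (exp ℂ)) +
        polyBernoulliGF k * rescale x (exp ℂ) * bernoulliPowerSeries ℂ =
      X * (C x * (polyBernoulliGF k * rescale x (exp ℂ))) +
        polyBernoulliGF (k - 1) * rescale x (exp ℂ) * bernoulliPowerSeries ℂ := by
  rw [Derivation.leibniz, derivative_rescale, derivative_exp, smul_eq_mul, smul_eq_mul]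
  linear_combination rescale x (exp ℂ) * X_mul_derivative_polyBernoulliGF_add k

theorem polyBernoulli_eq_factorial_mul_coeff (k : ℤ) (n : ℕ) (x : ℂ) :
    polyBernoulli k n x = n ! * coeff n (polyBernoulliGF k * rescale x (exp ℂ)) := by
  rw [polyBernoulli, mk_pow_div_factorial]

theorem polyBernoulli_succ_recurrence (k : ℤ) (n : ℕ) (x : ℂ) :
    ((n : ℂ) + 1) * polyBernoulli k (n + 1) x - ((n : ℂ) + 1) * x * polyBernoulli k n x +
        ∑ l ∈ range (n + 1 + 1), ((n + 1).choose l : ℂ) * (bernoulli (n + 1 - l) : ℂ) *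
          polyBernoulli k l x =
      ∑ l ∈ range (n + 1 + 1), ((n + 1).choose l : ℂ) * (bernoulli (n + 1 - l) : ℂ) *
        polyBernoulli (k - 1) l x := by
  simp only [polyBernoulli_eq_factorial_mul_coeff, ← factorial_mul_coeff_mul_bernoulliPowerSeries]
  have h := congrArg (fun f => ((n + 1)! : ℂ) * coeff (n + 1) f)
    (X_mul_derivative_polyBernoulliGF_mul_exp k x)
  simp only [map_add, mul_add, coeff_succ_X_mul, coeff_derivative, coeff_C_mul] at h
  push_cast [factorial_succ] at h ⊢
  linear_combination h

theorem polyBernoulli_corollary (k : ℤ) (n : ℕ) (hn : 1 ≤ n) (x : ℂ) :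
    ((n : ℂ) + 1) * polyBernoulli k n x - (n : ℂ) * (x + 1 / 2) * polyBernoulli k (n - 1) x +
        ∑ l ∈ Finset.range (n - 1), (n.choose l : ℂ) * (bernoulli (n - l) : ℂ) *
          polyBernoulli k l x =
      ∑ l ∈ Finset.range (n + 1), (n.choose l : ℂ) * (bernoulli (n - l) : ℂ) *
        polyBernoulli (k - 1) l x := by
  obtain ⟨m, rfl⟩ := Nat.exists_eq_add_of_le' hn
  rw [← polyBernoulli_succ_recurrence, sum_range_succ, sum_range_succ, Nat.add_sub_cancel,
    Nat.choose_succ_self_right, Nat.choose_self, Nat.add_sub_cancel_left, Nat.sub_self,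
    bernoulli_one, bernoulli_zero]
  push_cast
  ring
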